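/- arXiv:2312.14255 — 2 statements merged into one kernel-verified Lean document; each statement's English description precedes it below -/
import Mathlib

section
/- Let g ≥ 1 and let k₁, …, k_g be positive integers with each kᵢ ≥ 3 and total sum k = k₁ + ⋯ + k_g. Then log(k₁ ⋯ k_g) − log 3 ≤ (k − 2g − 1) · log 3. -/
lemma nat_le_three_pow (n : ℕ) (hn : 3 ≤ n) : n ≤ 3 ^ (n - 2) := by
  induction n with
  | zero => omega
  | succ m ih =>
    rcases Nat.lt_or_ge m 3 with h | h
    · interval_cases m <;> simp <;> omega
    · have := ih h
      have h2 : m + 1 - 2 = (m - 2) + 1 := by omega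
      rw [h2, pow_succ]
      omega

theorem log_prod_sub_log_three_le (g : ℕ) (hg : 1 ≤ g) (k : Fin g → ℕ)
    (hk : ∀ i, 3 ≤ k i) (ktot : ℕ) (hktot : ktot = ∑ i, k i) :
    Real.log (∏ i, (k i : ℝ)) - Real.log 3 ≤
      ((ktot : ℝ) - 2 * g - 1) * Real.log 3 := by
  have hprod : (∏ i, k i) ≤ 3 ^ (ktot - 2 * g) := by
    calc ∏ i, k i ≤ ∏ i, 3 ^ (k i - 2) :=
          Finset.prod_le_prod' fun i _ => nat_le_three_pow _ (hk i)
      _ = 3 ^ (∑ i, (k i - 2)) := by rw [Finset.prod_pow_eq_pow_sum]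
      _ = 3 ^ (ktot - 2 * g) := by
          congr 1
          have hsum : ∑ i, (k i - 2) + 2 * g = ∑ i, k i := by
            have : ∑ i, ((k i - 2) + 2) = ∑ i, k i :=
              Finset.sum_congr rfl fun i _ => by have := hk i; omega
            calc ∑ i, (k i - 2) + 2 * g
                = ∑ i, (k i - 2) + ∑ _i : Fin g, 2 := by
                  simp [Finset.sum_const, mul_comm]
              _ = ∑ i, ((k i - 2) + 2) := Finset.sum_add_distrib.symm
              _ = ∑ i, k i := this
          omega
  have h2g : 2 * g ≤ ktot := by
    have : ∑ _i : Fin g, 2 ≤ ∑ i, k i :=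
      Finset.sum_le_sum fun i _ => by have := hk i; omega
    simpa [hktot, mul_comm] using this
  have hpos : (0:ℝ) < ∏ i, (k i : ℝ) :=
    Finset.prod_pos fun i _ => by exact_mod_cast (by have := hk i; omega : 0 < k i)
  have hlog : Real.log (∏ i, (k i : ℝ)) ≤ ((ktot : ℝ) - 2 * g) * Real.log 3 := by
    have hcast : (∏ i, (k i : ℝ)) ≤ ((3:ℝ)) ^ (ktot - 2 * g) := by
      have := hprod
      push_cast
      exact_mod_cast Nat.cast_le.mpr hprod
    calc Real.log (∏ i, (k i : ℝ)) ≤ Real.log ((3:ℝ) ^ (ktot - 2 * g)) :=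
          Real.log_le_log hpos hcast
      _ = ((ktot - 2 * g : ℕ) : ℝ) * Real.log 3 := by
          rw [Real.log_pow]
      _ = ((ktot : ℝ) - 2 * g) * Real.log 3 := by
          congr 1
          push_cast [Nat.cast_sub h2g]
          ring
  have hlog3 : (0:ℝ) ≤ Real.log 3 := Real.log_nonneg (by norm_num)
  nlinarith [hlog, hlog3]
end

section
/- Let Q be an n × n real matrix with entries q_{ij}, and suppose the sum of the absolute values of all entries of Q is at most k. Then |det Q| ≤ (k/n)^n. -/
lemma prod_le_avg_pow (n : ℕ) (hn : 1 ≤ n) (r : Fin n → ℝ) (hr : ∀ i, 0 ≤ r i) :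
    ∏ i, r i ≤ ((∑ i, r i) / n) ^ n := by
  have hn0 : (0:ℝ) < n := by exact_mod_cast hn
  have hw : ∑ _i : Fin n, (n:ℝ)⁻¹ = 1 := by
    simp [Finset.sum_const]
    field_simp
  have h := Real.geom_mean_le_arith_mean_weighted Finset.univ (fun _ => (n:ℝ)⁻¹) r
    (fun i _ => by positivity) hw (fun i _ => hr i)
  have hL : ∀ i : Fin n, (r i ^ ((n:ℝ)⁻¹)) ^ n = r i := by
    intro i
    rw [← Real.rpow_natCast (r i ^ ((n:ℝ)⁻¹)) n, ← Real.rpow_mul (hr i),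
      inv_mul_cancel₀ (ne_of_gt hn0), Real.rpow_one]
  calc ∏ i, r i = (∏ i, r i ^ ((n:ℝ)⁻¹)) ^ n := by
        rw [← Finset.prod_pow]
        exact (Finset.prod_congr rfl (fun i _ => (hL i))).symm
    _ ≤ (∑ i, (n:ℝ)⁻¹ * r i) ^ n := by
        apply pow_le_pow_left₀ _ h
        exact Finset.prod_nonneg fun i _ => Real.rpow_nonneg (hr i) _
    _ = ((∑ i, r i) / n) ^ n := by
        rw [← Finset.mul_sum]
        ring_nf

theorem abs_det_le_entry_sum_pow (n : ℕ) (hn : 1 ≤ n)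
    (Q : Matrix (Fin n) (Fin n) ℝ) (k : ℝ) (hk : 0 < k)
    (hQ : ∑ i, ∑ j, |Q i j| ≤ k) :
    |Q.det| ≤ (k / n) ^ n := by
  have hn0 : (0:ℝ) < n := by exact_mod_cast hn
  set r : Fin n → ℝ := fun i => ∑ j, |Q j i| with hr_def
  have hr : ∀ i, 0 ≤ r i := fun i => Finset.sum_nonneg fun j _ => abs_nonneg _
  have hsum : ∑ i, r i ≤ k := by
    rw [hr_def]
    rw [Finset.sum_comm]
    exact hQ
  -- step 1: |det| ≤ ∑ over permutations
  have h1 : |Q.det| ≤ ∑ σ : Equiv.Perm (Fin n), ∏ i, |Q (σ i) i| := by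
    rw [Matrix.det_apply']
    refine (Finset.abs_sum_le_sum_abs _ _).trans ?_
    apply Finset.sum_le_sum
    intro σ _
    rw [abs_mul, Finset.abs_prod]
    rcases Int.units_eq_one_or (Equiv.Perm.sign σ) with h | h <;>
      simp [h]
  -- step 2: sum over permutations ≤ sum over all functions
  have h2 : ∑ σ : Equiv.Perm (Fin n), ∏ i, |Q (σ i) i|
      ≤ ∑ f : Fin n → Fin n, ∏ i, |Q (f i) i| := by
    have himg : ∑ f ∈ Finset.univ.image (fun σ : Equiv.Perm (Fin n) => (σ : Fin n → Fin n)),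
        ∏ i, |Q (f i) i| = ∑ σ : Equiv.Perm (Fin n), ∏ i, |Q (σ i) i| :=
      Finset.sum_image (fun σ _ τ _ h => Equiv.coe_fn_injective h)
    rw [← himg]
    exact Finset.sum_le_sum_of_subset_of_nonneg (Finset.subset_univ _)
      (fun f _ _ => Finset.prod_nonneg fun i _ => abs_nonneg _)
  -- step 3: sum over all functions = product of column sums
  have h3 : ∑ f : Fin n → Fin n, ∏ i, |Q (f i) i| = ∏ i, r i := by
    rw [hr_def]
    rw [Finset.prod_univ_sum]
    rw [Fintype.piFinset_univ]
  have h4 : ∏ i, r i ≤ ((∑ i, r i) / n) ^ n := prod_le_avg_pow n hn r hr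
  have h5 : ((∑ i, r i) / n) ^ n ≤ (k / n) ^ n := by
    apply pow_le_pow_left₀ (by positivity)
    exact div_le_div_of_nonneg_right hsum hn0.le
  linarith [h1, h2, h3 ▸ h2, h4, h5]
end
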